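/- The Jacobi–Anger expansion: for all real τ and θ, cos(τ cos θ) = J_0(τ) + 2 Σ_{m=1}^∞ (-1)^m J_{2m}(τ) cos(2mθ). -/

import Mathlib

/-- Bessel function of the first kind of order `m`. -/
noncomputable def besselJ (m : ℕ) (τ : ℝ) : ℝ :=
  ∑' k : ℕ, (-1 : ℝ) ^ k / (Nat.factorial k * Nat.factorial (m + k)) * (τ / 2) ^ (2 * k + m)

/-!
Expand `cos (τ cos θ)` in its Taylor series and each power `(2 cos θ) ^ (2k)` by the binomial
theorem into the harmonics `cos (2mθ)`, with coefficients `ε_m C(2k, k + m)` (Neumann's factor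
`ε_0 = 1`, `ε_m = 2` for `m > 0`, from pairing the terms `k ± m`). The resulting double series
is dominated termwise by the series of `cosh τ`, so it may be summed by columns instead, and the
`m`-th column is `ε_m (-1)^m J_{2m}(τ) cos (2mθ)`.
-/

open Finset Real
open scoped Nat

theorem Finset.sum_range_two_mul_add_one {M : Type*} [AddCommMonoid M] (f : ℕ → M) (k : ℕ) :
    ∑ j ∈ range (2 * k + 1), f j = f k + ∑ m ∈ range k, (f (k + (m + 1)) + f (k - (m + 1))) := by
  rw [show 2 * k + 1 = k + (k + 1) by omega, sum_range_add, sum_range_succ', ← sum_range_reflect,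
    sum_add_distrib]
  have hreflect : ∀ m ∈ range k, f (k - 1 - m) = f (k - (m + 1)) := fun m _ => by
    rw [Nat.sub_sub, add_comm 1]
  rw [sum_congr rfl hreflect]
  abel

theorem two_mul_cos_pow (n : ℕ) (x : ℝ) :
    (2 * cos x) ^ n = ∑ j ∈ range (n + 1), (n.choose j : ℝ) * cos ((2 * j - n) * x) := by
  have hexp : (((2 * cos x) ^ n : ℝ) : ℂ) =
      ∑ j ∈ range (n + 1), (n.choose j : ℂ) * Complex.exp (((2 * j - n) * x : ℝ) * Complex.I) := by
    push_cast
    rw [Complex.two_cos, add_pow]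
    refine sum_congr rfl fun j hj => ?_
    have hjn : j ≤ n := Nat.lt_succ_iff.mp (mem_range.mp hj)
    rw [← Complex.exp_nat_mul, ← Complex.exp_nat_mul, ← Complex.exp_add, Nat.cast_sub hjn]
    ring_nf
  have hre := congrArg Complex.re hexp
  rw [Complex.ofReal_re, Complex.re_sum] at hre
  rw [hre]
  refine sum_congr rfl fun j _ => ?_
  rw [← Complex.ofReal_natCast, Complex.re_ofReal_mul, Complex.exp_ofReal_mul_I_re]

def neumannFactor (m : ℕ) : ℝ := if m = 0 then 1 else 2

theorem two_mul_cos_pow_two_mul (k : ℕ) (x : ℝ) :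
    (2 * cos x) ^ (2 * k) =
      ∑ m ∈ range (k + 1), neumannFactor m * ((2 * k).choose (k + m) : ℝ) * cos (2 * m * x) := by
  rw [two_mul_cos_pow, sum_range_two_mul_add_one, sum_range_succ', add_comm]
  congr 1
  · refine sum_congr rfl fun m hm => ?_
    have hmk : m + 1 ≤ k := mem_range.mp hm
    rw [Nat.choose_symm_of_eq_add (show 2 * k = k - (m + 1) + (k + (m + 1)) by omega),
      Nat.cast_sub hmk]
    simp only [neumannFactor, Nat.add_one_ne_zero, if_false]
    push_cast
    rw [show (2 * ((k : ℝ) - (m + 1)) - 2 * k) * x = -(2 * (m + 1) * x) by ring, cos_neg,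
      show (2 * ((k : ℝ) + (m + 1)) - 2 * k) * x = 2 * (m + 1) * x by ring]
    ring
  · simp [neumannFactor]

theorem neumannFactor_nonneg (m : ℕ) : 0 ≤ neumannFactor m := by
  unfold neumannFactor
  split_ifs <;> norm_num

theorem hasSum_two_mul_cos_pow_two_mul (k : ℕ) (x : ℝ) :
    HasSum (fun m => neumannFactor m * ((2 * k).choose (k + m) : ℝ) * cos (2 * m * x))
      ((2 * cos x) ^ (2 * k)) := by
  rw [two_mul_cos_pow_two_mul]
  refine hasSum_sum_of_ne_finset_zero fun m hm => ?_
  rw [Nat.choose_eq_zero_of_lt (by rw [mem_range] at hm; omega), Nat.cast_zero, mul_zero, zero_mul]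

section JacobiAnger

variable (τ θ : ℝ)

/-- `(2 * k).choose (k + m)` vanishes for `k < m`, so no case split is needed. -/
noncomputable def jacobiAngerTerm (k m : ℕ) : ℝ :=
  (-1) ^ k * (τ / 2) ^ (2 * k) / (2 * k)! *
    (neumannFactor m * ((2 * k).choose (k + m) : ℝ) * cos (2 * m * θ))

theorem hasSum_jacobiAngerTerm_row (k : ℕ) :
    HasSum (jacobiAngerTerm τ θ k) ((-1) ^ k * (τ * cos θ) ^ (2 * k) / (2 * k)!) := by
  have hvalue : (-1) ^ k * (τ * cos θ) ^ (2 * k) / (2 * k)! =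
      (-1) ^ k * (τ / 2) ^ (2 * k) / (2 * k)! * (2 * cos θ) ^ (2 * k) := by
    rw [div_mul_eq_mul_div, mul_assoc, ← mul_pow, show τ / 2 * (2 * cos θ) = τ * cos θ by ring]
  rw [hvalue]
  exact (hasSum_two_mul_cos_pow_two_mul k θ).mul_left _

theorem tsum_jacobiAngerTerm_col (m : ℕ) :
    ∑' k, jacobiAngerTerm τ θ k m =
      neumannFactor m * ((-1) ^ m * besselJ (2 * m) τ * cos (2 * m * θ)) := by
  have hsupp : Function.support (fun k => jacobiAngerTerm τ θ k m) ⊆ Set.range (· + m) := by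
    refine fun k hk => ⟨k - m, Nat.sub_add_cancel (not_lt.mp fun hkm => hk ?_)⟩
    simp only [jacobiAngerTerm]
    rw [Nat.choose_eq_zero_of_lt (by omega), Nat.cast_zero, mul_zero, zero_mul, mul_zero]
  have hshift (j : ℕ) : jacobiAngerTerm τ θ (j + m) m =
      neumannFactor m * ((-1) ^ m * cos (2 * m * θ)) *
        ((-1) ^ j / (j ! * (2 * m + j)!) * (τ / 2) ^ (2 * j + 2 * m)) := by
    rw [jacobiAngerTerm, show 2 * (j + m) = 2 * m + j + j by ring,
      show j + m + m = 2 * m + j by ring, Nat.cast_add_choose]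
    field_simp
    ring
  rw [← (add_left_injective m).tsum_eq hsupp, tsum_congr hshift, tsum_mul_left, besselJ]
  ring

theorem summable_jacobiAngerTerm : Summable (Function.uncurry (jacobiAngerTerm τ θ)) := by
  set bound : ℕ × ℕ → ℝ := fun p =>
    (τ / 2) ^ (2 * p.1) / (2 * p.1)! * (neumannFactor p.2 * ((2 * p.1).choose (p.1 + p.2) : ℝ))
  have hbound_nonneg : 0 ≤ bound := fun p =>
    mul_nonneg (div_nonneg ((even_two_mul _).pow_nonneg _) (Nat.cast_nonneg _))
      (mul_nonneg (neumannFactor_nonneg _) (Nat.cast_nonneg _))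
  have hbound_row (k : ℕ) : HasSum (fun m => bound (k, m)) (τ ^ (2 * k) / (2 * k)!) := by
    have hvalue :
        τ ^ (2 * k) / (2 * k)! = (τ / 2) ^ (2 * k) / (2 * k)! * (2 * cos 0) ^ (2 * k) := by
      rw [cos_zero, mul_one, div_mul_eq_mul_div, ← mul_pow, div_mul_cancel₀ τ two_ne_zero]
    rw [hvalue]
    simpa only [mul_zero, cos_zero, mul_one] using
      (hasSum_two_mul_cos_pow_two_mul k 0).mul_left ((τ / 2) ^ (2 * k) / (2 * k)!)
  have hbound : Summable bound := (summable_prod_of_nonneg hbound_nonneg).mpr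
    ⟨fun k => (hbound_row k).summable, by
      simpa only [(hbound_row _).tsum_eq] using (Real.hasSum_cosh τ).summable⟩
  refine hbound.of_norm_bounded fun ⟨k, m⟩ => ?_
  have hterm : jacobiAngerTerm τ θ k m = (-1) ^ k * bound (k, m) * cos (2 * m * θ) := by
    simp only [jacobiAngerTerm, bound]
    ring
  rw [Function.uncurry_apply_pair, hterm, norm_mul, norm_mul, norm_pow, norm_neg, norm_one, one_pow,
    one_mul, Real.norm_of_nonneg (hbound_nonneg _), Real.norm_eq_abs]
  exact mul_le_of_le_one_right (hbound_nonneg _) (abs_cos_le_one _)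

end JacobiAnger

/-- Jacobi–Anger expansion for the cosine: the sum over `n : ℕ` corresponds to the
sum over `m = n + 1 ≥ 1` in the usual formulation. -/
theorem jacobi_anger_cos (τ θ : ℝ) :
    Real.cos (τ * Real.cos θ) =
      besselJ 0 τ +
        2 * ∑' n : ℕ, (-1 : ℝ) ^ (n + 1) * besselJ (2 * (n + 1)) τ *
          Real.cos (2 * (n + 1) * θ) := by
  have hsum := summable_jacobiAngerTerm τ θ
  have hcols : Summable fun m =>
      neumannFactor m * ((-1) ^ m * besselJ (2 * m) τ * cos (2 * m * θ)) := by
    simpa only [Prod.swap_prod_mk, Function.uncurry_apply_pair, tsum_jacobiAngerTerm_col] using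
      hsum.prod_symm.prod
  calc cos (τ * cos θ) = ∑' k, ∑' m, jacobiAngerTerm τ θ k m := by
        rw [cos_eq_tsum]
        exact tsum_congr fun k => (hasSum_jacobiAngerTerm_row τ θ k).tsum_eq.symm
    _ = ∑' m, ∑' k, jacobiAngerTerm τ θ k m := hsum.tsum_comm.symm
    _ = ∑' m, neumannFactor m * ((-1) ^ m * besselJ (2 * m) τ * cos (2 * m * θ)) :=
        tsum_congr (tsum_jacobiAngerTerm_col τ θ)
    _ = _ := by
        rw [hcols.tsum_eq_zero_add, ← tsum_mul_left]
        simp [neumannFactor]
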